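/- arXiv:1211.3074 — 2 statements merged into one kernel-verified Lean document; each statement's English description precedes it below -/
import Mathlib

section
/- Let R > 0, m > 0, σ = 3^{4/3}/4, c = 1/R + (8σ/3) R^{1/3} m^{1/3}, and b = σ m^{1/3}. Define ψ(x) = c|x| − b|x|^{4/3} for x ∈ ℝⁿ with 0 < |x| ≤ R. Then ψ(x) > 0 and Δ_∞ ψ(x) ≤ −m for all x with 0 < |x| ≤ R; moreover ψ(x) > 1 when |x| = R. -/
/-!
For a radial function `ψ = g ∘ ‖·‖` one has `Δ_∞ ψ = g'² g''` away from the origin. Here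
`g r = c r - b r^{4/3}`, so `g' r = c - (4b/3) r^{1/3}` and `g'' r = -(4b/9) r^{-2/3}`.
On `0 < r ≤ R` the choice of `c` gives `g' r ≥ 1/R + (4σ/3) (mR)^{1/3} > 0`, whence `ψ > 0`, and
`g'² g'' ≤ -(64 σ³ / 81) m (R/r)^{2/3} ≤ -m` because `σ³ = 81/64`.
-/

noncomputable def infLap {n : ℕ} (u : EuclideanSpace ℝ (Fin n) → ℝ)
    (x : EuclideanSpace ℝ (Fin n)) : ℝ :=
  (inner ℝ (fderiv ℝ (gradient u) x (gradient u x)) (gradient u x) : ℝ)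

open Real InnerProductSpace Filter Topology

section Radial

variable {E : Type*} [NormedAddCommGroup E] [InnerProductSpace ℝ E]

theorem hasFDerivAt_norm_of_ne_zero {x : E} (hx : x ≠ 0) :
    HasFDerivAt (‖·‖) (‖x‖⁻¹ • innerSL ℝ x) x := by
  have h := (hasStrictFDerivAt_norm_sq x).hasFDerivAt.sqrt (by positivity)
  simp only [sqrt_sq (norm_nonneg _)] at h
  convert h using 1
  ext v
  simp only [smul_apply, innerSL_apply_apply, smul_eq_mul, nsmul_eq_mul,
    Nat.cast_ofNat]
  field_simp

theorem HasDerivAt.hasGradientAt_comp_norm [CompleteSpace E] {g : ℝ → ℝ} {g' : ℝ} {x : E}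
    (hx : x ≠ 0) (hg : HasDerivAt g g' ‖x‖) :
    HasGradientAt (fun y => g ‖y‖) ((g' / ‖x‖) • x) x := by
  rw [hasGradientAt_iff_hasFDerivAt]
  refine (hg.comp_hasFDerivAt x (hasFDerivAt_norm_of_ne_zero hx)).congr_fderiv ?_
  ext v
  simp only [smul_apply, coe_innerSL_apply, smul_eq_mul, map_smul, toDual_apply_apply]
  ring

end Radial

theorem infLap_comp_norm {n : ℕ} {g g' : ℝ → ℝ} {g'' : ℝ} {x : EuclideanSpace ℝ (Fin n)}
    (hx : x ≠ 0) (hg : ∀ᶠ s in 𝓝 ‖x‖, HasDerivAt g (g' s) s) (hg' : HasDerivAt g' g'' ‖x‖) :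
    infLap (fun y => g ‖y‖) x = g' ‖x‖ ^ 2 * g'' := by
  have hr : ‖x‖ ≠ 0 := norm_ne_zero_iff.2 hx
  have hgrad : gradient (fun y => g ‖y‖) =ᶠ[𝓝 x] fun y => (g' ‖y‖ / ‖y‖) • y := by
    filter_upwards [(continuous_norm.tendsto x).eventually hg, isOpen_ne.mem_nhds hx]
      with y hgy hy
    exact (hgy.hasGradientAt_comp_norm hy).gradient
  have hslope : HasDerivAt (fun s => g' s / s) ((g'' * ‖x‖ - g' ‖x‖) / ‖x‖ ^ 2) ‖x‖ := by
    simpa using hg'.fun_div (hasDerivAt_id' ‖x‖) hr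
  have hD : HasFDerivAt (fun y : EuclideanSpace ℝ (Fin n) => (g' ‖y‖ / ‖y‖) • y) _ x :=
    (hslope.comp_hasFDerivAt x (hasFDerivAt_norm_of_ne_zero hx)).smul (hasFDerivAt_id x)
  rw [infLap, hgrad.fderiv_eq, hgrad.eq_of_nhds, hD.fderiv]
  simp only [Function.comp_apply, add_apply, smul_apply, ContinuousLinearMap.id_apply,
    ContinuousLinearMap.smulRight_apply, innerSL_apply_apply, smul_eq_mul, inner_add_left,
    real_inner_smul_left, real_inner_smul_right, real_inner_self_eq_norm_sq]
  field_simp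
  ring

theorem rpow_one_third_pow_three {r : ℝ} (hr : 0 ≤ r) : (r ^ ((1:ℝ)/3)) ^ 3 = r := by
  rw [one_div, show (3:ℝ) = ((3:ℕ):ℝ) by norm_num, rpow_inv_natCast_pow hr (by norm_num)]

theorem rpow_four_thirds {r : ℝ} (hr : 0 ≤ r) : r ^ ((4:ℝ)/3) = r * r ^ ((1:ℝ)/3) := by
  rw [show (4:ℝ)/3 = 1 + 1/3 by norm_num, rpow_add' hr (by norm_num), rpow_one]

theorem hasDerivAt_mul_sub_mul_rpow_four_thirds (c b : ℝ) {s : ℝ} (hs : 0 < s) :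
    HasDerivAt (fun s => c * s - b * s ^ ((4:ℝ)/3)) (c - 4 * b / 3 * s ^ ((1:ℝ)/3)) s := by
  refine (((hasDerivAt_id' s).const_mul c).sub
    ((hasDerivAt_rpow_const (p := (4:ℝ)/3) (Or.inl hs.ne')).const_mul b)).congr_deriv ?_
  rw [show (4:ℝ)/3 - 1 = 1/3 by norm_num]
  ring

theorem hasDerivAt_sub_mul_rpow_one_third (c b : ℝ) {s : ℝ} (hs : 0 < s) :
    HasDerivAt (fun s => c - 4 * b / 3 * s ^ ((1:ℝ)/3)) (-(4 * b / 9) * s ^ ((1:ℝ)/3) / s) s := by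
  refine ((hasDerivAt_const s c).sub
    ((hasDerivAt_rpow_const (p := (1:ℝ)/3) (Or.inl hs.ne')).const_mul (4 * b / 3))).congr_deriv ?_
  rw [rpow_sub_one hs.ne']
  ring

theorem infLap_mul_norm_sub_mul_norm_rpow_four_thirds {n : ℕ} (c b : ℝ)
    {x : EuclideanSpace ℝ (Fin n)} (hx : x ≠ 0) :
    infLap (fun y => c * ‖y‖ - b * ‖y‖ ^ ((4:ℝ)/3)) x =
      (c - 4 * b / 3 * ‖x‖ ^ ((1:ℝ)/3)) ^ 2 * (-(4 * b / 9) * ‖x‖ ^ ((1:ℝ)/3) / ‖x‖) := by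
  have hr : 0 < ‖x‖ := norm_pos_iff.2 hx
  exact infLap_comp_norm (g := fun s => c * s - b * s ^ ((4:ℝ)/3))
    (g' := fun s => c - 4 * b / 3 * s ^ ((1:ℝ)/3)) hx
    (eventually_of_mem (Ioi_mem_nhds hr) fun _ hs => hasDerivAt_mul_sub_mul_rpow_four_thirds c b hs)
    (hasDerivAt_sub_mul_rpow_one_third c b hr)

theorem le_sub_mul_rpow_one_third {R m σ c b r : ℝ} (hm : 0 ≤ m) (hσ : 0 ≤ σ)
    (hc : c = 1 / R + (8 * σ / 3) * R ^ ((1:ℝ)/3) * m ^ ((1:ℝ)/3))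
    (hb : b = σ * m ^ ((1:ℝ)/3)) (hr : 0 ≤ r) (hrR : r ≤ R) :
    1 / R + 4 * σ / 3 * m ^ ((1:ℝ)/3) * R ^ ((1:ℝ)/3) ≤ c - 4 * b / 3 * r ^ ((1:ℝ)/3) := by
  have hroot : r ^ ((1:ℝ)/3) ≤ R ^ ((1:ℝ)/3) := rpow_le_rpow hr hrR (by norm_num)
  have hσm : 0 ≤ σ * m ^ ((1:ℝ)/3) := by positivity
  rw [hc, hb]
  nlinarith [mul_le_mul_of_nonneg_left hroot hσm]

theorem three_rpow_four_thirds_div_four_pow_three : (3 ^ ((4:ℝ)/3) / 4 : ℝ) ^ 3 = 81 / 64 := by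
  rw [rpow_four_thirds (by norm_num), div_pow, mul_pow, rpow_one_third_pow_three (by norm_num)]
  norm_num

theorem cube_le_sq_mul_div_sq {σ M ρ a D : ℝ} (hσ : σ ^ 3 = 81 / 64) (hM : 0 < M) (ha : 0 < a)
    (haρ : a ≤ ρ) (hD : 4 * σ / 3 * M * ρ ≤ D) : M ^ 3 ≤ D ^ 2 * (4 * σ * M / 9) / a ^ 2 := by
  have hσ0 : 0 < σ := (Odd.pow_pos_iff (n := 3) (by decide)).1 (by rw [hσ]; norm_num)
  have hρ : 0 < ρ := ha.trans_le haρ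
  rw [le_div_iff₀ (by positivity)]
  calc M ^ 3 * a ^ 2 ≤ M ^ 3 * ρ ^ 2 := by gcongr
    _ = (4 * σ / 3 * M * ρ) ^ 2 * (4 * σ * M / 9) := by
      linear_combination (-(64 / 81) * M ^ 3 * ρ ^ 2) * hσ
    _ ≤ D ^ 2 * (4 * σ * M / 9) := by gcongr

theorem stmt12_general (n : ℕ) (R m : ℝ) (hR : 0 < R) (hm : 0 < m)
    (σ c b : ℝ) (hσ : σ = 3 ^ ((4:ℝ)/3) / 4)
    (hc : c = 1 / R + (8 * σ / 3) * R ^ ((1:ℝ)/3) * m ^ ((1:ℝ)/3))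
    (hb : b = σ * m ^ ((1:ℝ)/3))
    (ψ : EuclideanSpace ℝ (Fin n) → ℝ)
    (hψ : ∀ x, ψ x = c * ‖x‖ - b * ‖x‖ ^ ((4:ℝ)/3)) :
    (∀ x : EuclideanSpace ℝ (Fin n), 0 < ‖x‖ → ‖x‖ ≤ R →
      0 < ψ x ∧ infLap ψ x ≤ -m) ∧
    (∀ x : EuclideanSpace ℝ (Fin n), ‖x‖ = R → 1 < ψ x) := by
  have hσ3 : σ ^ 3 = 81 / 64 := hσ ▸ three_rpow_four_thirds_div_four_pow_three
  have hσ0 : 0 < σ := by rw [hσ]; positivity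
  set M := m ^ ((1:ℝ)/3)
  set ρ := R ^ ((1:ℝ)/3)
  have hM : 0 < M := by positivity
  have hslope := fun r => le_sub_mul_rpow_one_third (r := r) hm.le hσ0.le hc hb
  refine ⟨fun x hx hxR => ⟨?_, ?_⟩, fun x hxR => ?_⟩
  · have hgap : 0 < c - b * ‖x‖ ^ ((1:ℝ)/3) := by
      have : 0 ≤ b * ‖x‖ ^ ((1:ℝ)/3) := by rw [hb]; positivity
      linarith [hslope ‖x‖ hx.le hxR, (by positivity : 0 < 1 / R + 4 * σ / 3 * M * ρ)]
    have hψx : ψ x = ‖x‖ * (c - b * ‖x‖ ^ ((1:ℝ)/3)) := by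
      rw [hψ, rpow_four_thirds hx.le]
      ring
    exact hψx ▸ mul_pos hx hgap
  · set a := ‖x‖ ^ ((1:ℝ)/3) with hadef
    have ha : 0 < a := by positivity
    have haρ : a ≤ ρ := rpow_le_rpow hx.le hxR (by norm_num)
    have hD : 4 * σ / 3 * M * ρ ≤ c - 4 * b / 3 * a :=
      le_of_add_le_of_nonneg_right (hslope ‖x‖ hx.le hxR) (by positivity)
    rw [funext hψ, infLap_mul_norm_sub_mul_norm_rpow_four_thirds c b (norm_pos_iff.1 hx)]
    calc (c - 4 * b / 3 * a) ^ 2 * (-(4 * b / 9) * a / ‖x‖)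
        = -((c - 4 * b / 3 * a) ^ 2 * (4 * σ * M / 9) / a ^ 2) := by
          rw [← rpow_one_third_pow_three hx.le, ← hadef, hb]
          field_simp
      _ ≤ -M ^ 3 := neg_le_neg (cube_le_sq_mul_div_sq hσ3 hM ha haρ hD)
      _ = -m := by rw [rpow_one_third_pow_three hm.le]
  · have hψR : ψ x = 1 + 5 * σ / 3 * M * ρ * R := by
      rw [hψ, hxR, rpow_four_thirds hR.le, hc, hb]
      field_simp
      ring
    have : 0 < 5 * σ / 3 * M * ρ * R := by positivity
    linarith

theorem stmt12 (n : ℕ) (hn : 2 ≤ n) (R m : ℝ) (hR : 0 < R) (hm : 0 < m)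
    (σ c b : ℝ) (hσ : σ = 3 ^ ((4:ℝ)/3) / 4)
    (hc : c = 1 / R + (8 * σ / 3) * R ^ ((1:ℝ)/3) * m ^ ((1:ℝ)/3))
    (hb : b = σ * m ^ ((1:ℝ)/3))
    (ψ : EuclideanSpace ℝ (Fin n) → ℝ)
    (hψ : ∀ x, ψ x = c * ‖x‖ - b * ‖x‖ ^ ((4:ℝ)/3)) :
    (∀ x : EuclideanSpace ℝ (Fin n), 0 < ‖x‖ → ‖x‖ ≤ R →
      0 < ψ x ∧ infLap ψ x ≤ -m) ∧
    (∀ x : EuclideanSpace ℝ (Fin n), ‖x‖ = R → 1 < ψ x) :=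
  stmt12_general n R m hR hm σ c b hσ hc hb ψ hψ
end

section
/- Let k > 0, λ > 0, m > 0, and let F(t) = ∫_t^1 (1−s⁴)^{−1/4} ds for t ∈ [0,1]. Suppose u : (0,R) → (0,m) is a function satisfying F(u(r)/m) = (λk)^{1/4} r for all r ∈ (0,R), where (λk)^{1/4} R ≤ F(0). Then u is twice differentiable on (0,R) and satisfies u'(r)² u''(r) + λ k u(r)³ = 0, with u strictly decreasing. -/
/-!
`F` is strictly decreasing on `(0, 1)` with `F' = -(1 - t⁴)^(-1/4)`, so `v = u / m = F⁻¹ (c r)`,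
`c = (λk)^(1/4)`, is strictly decreasing. Its image is open, being cut out of `(0, 1)` by the
continuous condition `F t / c ∈ (0, R)`, so `v` is continuous and the inverse function rule gives
the autonomous equation `u' = -m c (1 - (u/m)⁴)^(1/4)`. Differentiating it once more,
`u'' = c (u/m)³ (1 - (u/m)⁴)^(-3/4) u'`, and in `u'² u''` the powers of `1 - (u/m)⁴` cancel,
leaving `-c⁴ u³ = -λ k u³`.
-/

noncomputable def F (t : ℝ) : ℝ := ∫ s in t..1, (1 - s ^ 4) ^ (-(1:ℝ)/4)

open MeasureTheory Set Filter Topology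

theorem StrictAntiOn.continuousAt_of_image_mem_nhds {α β : Type*} [LinearOrder α]
    [TopologicalSpace α] [OrderTopology α] [LinearOrder β] [TopologicalSpace β] [OrderTopology β]
    [DenselyOrdered β] {f : α → β} {s : Set α} {a : α} (h : StrictAntiOn f s) (hs : s ∈ 𝓝 a)
    (hfs : f '' s ∈ 𝓝 (f a)) : ContinuousAt f a :=
  StrictMonoOn.continuousAt_of_image_mem_nhds (β := βᵒᵈ) h.dual_right hs hfs

theorem hasDerivAt_deriv_of_hasDerivAt_comp {u g : ℝ → ℝ} {s : Set ℝ} {r g' : ℝ}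
    (hs : IsOpen s) (hu : ∀ x ∈ s, HasDerivAt u (g (u x)) x) (hr : r ∈ s)
    (hg : HasDerivAt g g' (u r)) : HasDerivAt (deriv u) (g' * g (u r)) r := by
  have hderiv : deriv u =ᶠ[𝓝 r] g ∘ u := by
    filter_upwards [hs.mem_nhds hr] with x hx using (hu x hx).deriv
  exact (hg.comp r (hu r hr)).congr_of_eventuallyEq hderiv

lemma one_sub_pow_four_pos {t : ℝ} (ht : t ∈ Ioo (0:ℝ) 1) : 0 < 1 - t ^ 4 := by
  have := pow_lt_one₀ ht.1.le ht.2 (by norm_num : (4:ℕ) ≠ 0)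
  linarith

lemma intervalIntegrable_F_integrand {t : ℝ} (ht₀ : 0 ≤ t) (ht₁ : t ≤ 1) :
    IntervalIntegrable (fun s : ℝ => (1 - s ^ 4) ^ (-(1:ℝ)/4)) volume t 1 := by
  have hdom : IntervalIntegrable (fun s : ℝ => (1 - s) ^ (-(1:ℝ)/4)) volume t 1 := by
    simpa using ((intervalIntegral.intervalIntegrable_rpow' (a := 0) (b := 1 - t) (r := -(1:ℝ)/4)
      (by norm_num)).comp_sub_left 1).symm
  refine hdom.mono_fun (by fun_prop : Measurable _).aestronglyMeasurable ?_
  rw [uIoc_of_le ht₁]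
  filter_upwards [ae_restrict_mem measurableSet_Ioc] with s hs
  have hs₀ : 0 < s := ht₀.trans_lt hs.1
  rw [Real.norm_of_nonneg (Real.rpow_nonneg (by nlinarith [pow_le_one₀ hs₀.le hs.2 (n := 4)]) _)]
  rcases hs.2.lt_or_eq with hs₁ | rfl
  · rw [Real.norm_of_nonneg (Real.rpow_nonneg (by linarith) _)]
    -- `1 - s ≤ 1 - s ^ 4` on `[0, 1]`, and the exponent is negative
    exact Real.rpow_le_rpow_of_nonpos (by linarith)
      (by nlinarith [pow_le_one₀ hs₀.le hs.2 (n := 3)]) (by norm_num)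
  · norm_num [Real.zero_rpow (by norm_num : -(1:ℝ)/4 ≠ 0)]

lemma hasDerivAt_F {t : ℝ} (ht : t ∈ Ioo (0:ℝ) 1) :
    HasDerivAt F (-(1 - t ^ 4) ^ (-(1:ℝ)/4)) t :=
  intervalIntegral.integral_hasDerivAt_left (intervalIntegrable_F_integrand ht.1.le ht.2.le)
    (by fun_prop : Measurable _).stronglyMeasurable.stronglyMeasurableAtFilter
    ((by fun_prop : ContinuousAt (fun s : ℝ => 1 - s ^ 4) t).rpow_const
      (Or.inl (one_sub_pow_four_pos ht).ne'))

lemma continuousOn_F : ContinuousOn F (Ioo 0 1) :=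
  fun _ ht => (hasDerivAt_F ht).continuousAt.continuousWithinAt

lemma strictAntiOn_F : StrictAntiOn F (Ioo 0 1) := by
  refine strictAntiOn_of_deriv_neg (convex_Ioo 0 1) continuousOn_F fun t ht => ?_
  rw [interior_Ioo] at ht
  rw [(hasDerivAt_F ht).deriv, neg_lt_zero]
  exact Real.rpow_pos_of_pos (one_sub_pow_four_pos ht) _

section Inverse

variable {v : ℝ → ℝ} {c R : ℝ}

lemma strictAntiOn_of_F_comp_eq (hc : 0 < c) (hv : ∀ r ∈ Ioo 0 R, v r ∈ Ioo 0 1)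
    (hFv : ∀ r ∈ Ioo 0 R, F (v r) = c * r) : StrictAntiOn v (Ioo 0 R) := by
  intro r₁ h₁ r₂ h₂ hlt
  by_contra! hle
  have := strictAntiOn_F.antitoneOn (hv r₁ h₁) (hv r₂ h₂) hle
  rw [hFv r₁ h₁, hFv r₂ h₂] at this
  nlinarith

lemma image_eq_of_F_comp_eq (hc : 0 < c) (hv : ∀ r ∈ Ioo 0 R, v r ∈ Ioo 0 1)
    (hFv : ∀ r ∈ Ioo 0 R, F (v r) = c * r) :
    v '' Ioo 0 R = Ioo 0 1 ∩ (fun t => F t / c) ⁻¹' Ioo 0 R := by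
  ext t
  constructor
  · rintro ⟨r, hr, rfl⟩
    exact ⟨hv r hr, by simpa [hFv r hr, hc.ne'] using hr⟩
  · rintro ⟨ht, hr⟩
    refine ⟨F t / c, hr, strictAntiOn_F.injOn (hv _ hr) ht ?_⟩
    rw [hFv _ hr, mul_div_cancel₀ _ hc.ne']

lemma continuousOn_of_F_comp_eq (hc : 0 < c) (hv : ∀ r ∈ Ioo 0 R, v r ∈ Ioo 0 1)
    (hFv : ∀ r ∈ Ioo 0 R, F (v r) = c * r) : ContinuousOn v (Ioo 0 R) := by
  have himage : IsOpen (v '' Ioo 0 R) := by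
    rw [image_eq_of_F_comp_eq hc hv hFv]
    exact (continuousOn_F.div_const c).isOpen_inter_preimage isOpen_Ioo isOpen_Ioo
  exact fun r hr => ((strictAntiOn_of_F_comp_eq hc hv hFv).continuousAt_of_image_mem_nhds
    (isOpen_Ioo.mem_nhds hr) (himage.mem_nhds (mem_image_of_mem v hr))).continuousWithinAt

lemma hasDerivAt_of_F_comp_eq (hc : 0 < c) (hv : ∀ r ∈ Ioo 0 R, v r ∈ Ioo 0 1)
    (hFv : ∀ r ∈ Ioo 0 R, F (v r) = c * r) {r : ℝ} (hr : r ∈ Ioo 0 R) :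
    HasDerivAt v (-c * (1 - v r ^ 4) ^ ((1:ℝ)/4)) r := by
  have hp := one_sub_pow_four_pos (hv r hr)
  have hleft : ∀ᶠ x in 𝓝 r, F (v x) / c = x := by
    filter_upwards [isOpen_Ioo.mem_nhds hr] with x hx
    rw [hFv x hx, mul_div_cancel_left₀ _ hc.ne']
  have hinv := HasDerivAt.of_local_left_inverse
    ((continuousOn_of_F_comp_eq hc hv hFv).continuousAt (isOpen_Ioo.mem_nhds hr))
    ((hasDerivAt_F (hv r hr)).div_const c)
    (div_ne_zero (neg_ne_zero.2 (Real.rpow_pos_of_pos hp _).ne') hc.ne') hleft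
  refine hinv.congr_deriv ?_
  rw [neg_div (4:ℝ) 1, Real.rpow_neg hp.le, neg_div, inv_neg, inv_div, div_inv_eq_mul, neg_mul]

end Inverse

lemma hasDerivAt_one_sub_div_pow_four_rpow {m y : ℝ} (hy : 0 < 1 - (y / m) ^ 4) :
    HasDerivAt (fun y => (1 - (y / m) ^ 4) ^ ((1:ℝ)/4))
      (-((y / m) ^ 3 / m) * (1 - (y / m) ^ 4) ^ (-(3:ℝ)/4)) y := by
  have h := ((((hasDerivAt_id' y).div_const m).fun_pow 4).const_sub 1).rpow_const
    (p := (1:ℝ)/4) (Or.inl hy.ne')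
  refine h.congr_deriv ?_
  rw [show (1:ℝ)/4 - 1 = -3/4 by norm_num]
  push_cast
  ring

theorem deriv_sq_mul_deriv_deriv_add_eq_zero {u : ℝ → ℝ} {s : Set ℝ} {m c r : ℝ} (hm : m ≠ 0)
    (hs : IsOpen s) (hu : ∀ x ∈ s, HasDerivAt u (-(m * c) * (1 - (u x / m) ^ 4) ^ ((1:ℝ)/4)) x)
    (hr : r ∈ s) (hp : 0 < 1 - (u r / m) ^ 4) :
    DifferentiableAt ℝ (deriv u) r ∧ deriv u r ^ 2 * deriv (deriv u) r + c ^ 4 * u r ^ 3 = 0 := by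
  have hu'' := hasDerivAt_deriv_of_hasDerivAt_comp
    (g := fun y => -(m * c) * (1 - (y / m) ^ 4) ^ ((1:ℝ)/4)) hs hu hr
    ((hasDerivAt_one_sub_div_pow_four_rpow hp).const_mul _)
  refine ⟨hu''.differentiableAt, ?_⟩
  rw [(hu r hr).deriv, hu''.deriv]
  have hcancel : ((1 - (u r / m) ^ 4) ^ ((1:ℝ)/4)) ^ 3 * (1 - (u r / m) ^ 4) ^ (-(3:ℝ)/4) = 1 := by
    rw [← Real.rpow_natCast, ← Real.rpow_mul hp.le, ← Real.rpow_add hp]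
    norm_num
  generalize ((1 - (u r / m) ^ 4) ^ ((1:ℝ)/4)) = q at hcancel ⊢
  generalize (1 - (u r / m) ^ 4) ^ (-(3:ℝ)/4) = P at hcancel ⊢
  field_simp
  linear_combination (-c ^ 4 * u r ^ 3) * hcancel

theorem stmt15_general (k lam m R : ℝ) (hk : 0 < k) (hlam : 0 < lam) (hm : 0 < m)
    (u : ℝ → ℝ)
    (hrange : ∀ r ∈ Set.Ioo (0:ℝ) R, u r ∈ Set.Ioo 0 m)
    (himp : ∀ r ∈ Set.Ioo (0:ℝ) R, F (u r / m) = (lam * k) ^ ((1:ℝ)/4) * r) :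
    (∀ r ∈ Set.Ioo (0:ℝ) R,
      DifferentiableAt ℝ u r ∧ DifferentiableAt ℝ (deriv u) r ∧
      (deriv u r) ^ 2 * deriv (deriv u) r + lam * k * u r ^ 3 = 0) ∧
    StrictAntiOn u (Set.Ioo 0 R) := by
  set c := (lam * k) ^ ((1:ℝ)/4)
  have hlk : 0 < lam * k := mul_pos hlam hk
  have hc : 0 < c := Real.rpow_pos_of_pos hlk _
  have hc4 : c ^ 4 = lam * k := by
    rw [← Real.rpow_natCast, ← Real.rpow_mul hlk.le]
    norm_num
  have hv : ∀ r ∈ Ioo 0 R, u r / m ∈ Ioo 0 1 := fun r hr =>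
    ⟨div_pos (hrange r hr).1 hm, (div_lt_one hm).2 (hrange r hr).2⟩
  have hu : ∀ r ∈ Ioo 0 R, HasDerivAt u (-(m * c) * (1 - (u r / m) ^ 4) ^ ((1:ℝ)/4)) r := by
    intro r hr
    have h := (hasDerivAt_of_F_comp_eq hc hv himp hr).const_mul m
    simp only [mul_div_cancel₀ _ hm.ne'] at h
    exact h.congr_deriv (by ring)
  refine ⟨fun r hr => ?_, fun r₁ h₁ r₂ h₂ hlt => ?_⟩
  · obtain ⟨hu'', hode⟩ := deriv_sq_mul_deriv_deriv_add_eq_zero hm.ne' isOpen_Ioo hu hr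
      (one_sub_pow_four_pos (hv r hr))
    exact ⟨(hu r hr).differentiableAt, hu'', hc4 ▸ hode⟩
  · exact (div_lt_div_iff_of_pos_right hm).1 (strictAntiOn_of_F_comp_eq hc hv himp h₁ h₂ hlt)

theorem stmt15 (k lam m R : ℝ) (hk : 0 < k) (hlam : 0 < lam) (hm : 0 < m)
    (hR : 0 < R) (hFR : (lam * k) ^ ((1:ℝ)/4) * R ≤ F 0)
    (u : ℝ → ℝ)
    (hrange : ∀ r ∈ Set.Ioo (0:ℝ) R, u r ∈ Set.Ioo 0 m)
    (himp : ∀ r ∈ Set.Ioo (0:ℝ) R, F (u r / m) = (lam * k) ^ ((1:ℝ)/4) * r) :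
    (∀ r ∈ Set.Ioo (0:ℝ) R,
      DifferentiableAt ℝ u r ∧ DifferentiableAt ℝ (deriv u) r ∧
      (deriv u r) ^ 2 * deriv (deriv u) r + lam * k * u r ^ 3 = 0) ∧
    StrictAntiOn u (Set.Ioo 0 R) :=
  stmt15_general k lam m R hk hlam hm u hrange himp
end
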